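/- Fix a real number λ > 0. For k ∈ ℕ define γ_k := √(ln(4k/π²)/(k·λ)), β_k := 1/(2√k), p_k := cos(2β_k), q_k := sin(2β_k), c_k := cos(γ_k), A_k := (p_k + i·q_k·(c_k)^{kλ})^k ∈ ℂ, and F_k := 1/2 + (sin(γ_k)/2)·Im(A_k). Then √(kλ/ln k) · (F_k − 1/2) converges, as k → ∞, to 1/(2√e). -/

import Mathlib

/-! Write `L = log (4k/π²)`, so that `kλ γ² = L` and `exp (L/2) = 2√k/π`. Since
`log cos γ = -γ²/2 + O(γ⁴)` and `kλ γ⁴ = L²/(kλ) → 0`, the damping factor `cos γ ^ (kλ)`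
is asymptotic to `exp (-L/2) = π/(2√k)`. With `cos (1/√k) = 1 - 1/(2k) + O(k⁻²)` and
`sin (1/√k) ~ 1/√k`, the base of `A` is `1 + (-1/2 + iπ/2)/k + o(1/k)`, so
`A → exp (-1/2 + iπ/2) = i/√e`. Finally `√(kλ/ln k) · sin γ ~ √(L/ln k) → 1`. -/

open Filter Real Topology

lemma mul_sinc (x : ℝ) : x * sinc x = sin x := by
  rcases eq_or_ne x 0 with rfl | hx
  · simp
  · rw [sinc_of_ne_zero hx, mul_div_cancel₀ _ hx]

lemma tendsto_sinc_of_tendsto_zero {ι : Type*} {l : Filter ι} {x : ι → ℝ}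
    (hx : Tendsto x l (𝓝 0)) :
    Tendsto (fun i => sinc (x i)) l (𝓝 1) :=
  (continuous_sinc.tendsto' 0 1 sinc_zero).comp hx

lemma tendsto_inv_sqrt_atTop : Tendsto (fun x : ℝ => (√x)⁻¹) atTop (𝓝 0) :=
  tendsto_inv_atTop_zero.comp tendsto_sqrt_atTop

lemma tendsto_sqrt_mul_sin_inv_sqrt : Tendsto (fun x : ℝ => √x * sin (√x)⁻¹) atTop (𝓝 1) := by
  refine (tendsto_sinc_of_tendsto_zero tendsto_inv_sqrt_atTop).congr' ?_
  filter_upwards [eventually_gt_atTop 0] with x hx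
  rw [sinc_of_ne_zero (by positivity), div_inv_eq_mul, mul_comm]

lemma tendsto_mul_cos_inv_sqrt_sub_one :
    Tendsto (fun x : ℝ => x * (cos (√x)⁻¹ - 1)) atTop (𝓝 (-1 / 2)) := by
  have h := (tendsto_sinc_of_tendsto_zero
    (by simpa using tendsto_inv_sqrt_atTop.div_const 2)).pow 2
  have h' : Tendsto (fun x : ℝ => -1 / 2 * sinc ((√x)⁻¹ / 2) ^ 2) atTop (𝓝 (-1 / 2)) := by
    simpa using h.const_mul (-1 / 2 : ℝ)
  refine h'.congr' ?_
  filter_upwards [eventually_gt_atTop 0] with x hx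
  have hcos : cos (√x)⁻¹ = 1 - 2 * sin ((√x)⁻¹ / 2) ^ 2 := by
    rw [← cos_two_mul_eq_one_sub, mul_div_cancel₀ _ two_ne_zero]
  rw [sinc_of_ne_zero (by positivity), hcos]
  field_simp
  rw [sq_sqrt hx.le]
  ring

lemma tendsto_cos_add_I_mul_sin_mul_pow {c : ℕ → ℝ} {a : ℝ}
    (hc : Tendsto (fun k : ℕ => √k * c k) atTop (𝓝 a)) :
    Tendsto (fun k : ℕ =>
        (((cos (√k)⁻¹ : ℝ) : ℂ) + Complex.I * ((sin (√k)⁻¹ : ℝ) : ℂ) * (c k : ℂ)) ^ k)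
      atTop (𝓝 (Complex.exp (-1 / 2 + a * Complex.I))) := by
  have hre := tendsto_mul_cos_inv_sqrt_sub_one.comp tendsto_natCast_atTop_atTop
  have him := (tendsto_sqrt_mul_sin_inv_sqrt.comp tendsto_natCast_atTop_atTop).mul hc
  rw [one_mul] at him
  have hlin := ((Complex.continuous_ofReal.tendsto _).comp hre).add
    (((Complex.continuous_ofReal.tendsto _).comp him).mul_const Complex.I)
  push_cast at hlin
  set z : ℕ → ℂ := fun k =>
    ((cos (√k)⁻¹ : ℝ) : ℂ) + Complex.I * ((sin (√k)⁻¹ : ℝ) : ℂ) * (c k : ℂ)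
  have hkz : ∀ k : ℕ, (((k : ℝ) * (cos (√k)⁻¹ - 1) : ℝ) : ℂ)
      + ((√k * sin (√k)⁻¹ * (√k * c k) : ℝ) : ℂ) * Complex.I = k * (z k - 1) := fun k => by
    have hk : (√k : ℂ) * √k = k := by exact_mod_cast mul_self_sqrt (Nat.cast_nonneg k)
    simp only [z, Complex.ofReal_mul, Complex.ofReal_sub, Complex.ofReal_one,
      Complex.ofReal_natCast]
    linear_combination (↑(sin (√k)⁻¹) * Complex.I * c k) * hk
  simpa [z] using Complex.tendsto_one_add_pow_exp_of_tendsto (hlin.congr hkz)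

lemma abs_log_cos_add_sq_div_two_le {x : ℝ} (hx : |x| ≤ 1 / 2) :
    |log (cos x) + x ^ 2 / 2| ≤ 3 * x ^ 4 := by
  have hx2 : x ^ 2 ≤ 1 / 4 := by nlinarith [sq_abs x, abs_nonneg x]
  have hcos_pos : 0 < cos x := cos_pos_of_le_one (hx.trans (by norm_num))
  have hcos_le : cos x ≤ 1 - x ^ 2 / 2 + 5 / 96 * x ^ 4 := by
    have h := (abs_le.mp (cos_bound (hx.trans (by norm_num)))).2
    rw [pow_abs, abs_of_nonneg (by positivity)] at h
    linarith
  have hcos_ge : 1 - x ^ 2 / 2 ≤ cos x := one_sub_sq_div_two_le_cos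
  have hlog_le : log (cos x) ≤ cos x - 1 := log_le_sub_one_of_pos hcos_pos
  have hlog_ge : 1 - (cos x)⁻¹ ≤ log (cos x) := by
    have h := log_le_sub_one_of_pos (inv_pos.mpr hcos_pos)
    rw [log_inv] at h
    linarith
  have hinv_le : (cos x)⁻¹ ≤ 1 + x ^ 2 / 2 + 3 * x ^ 4 := by
    rw [inv_le_iff_one_le_mul₀ hcos_pos]
    nlinarith
  rw [abs_le]
  constructor <;> nlinarith

lemma tendsto_cos_rpow_mul_exp {ι : Type*} {l : Filter ι} {γ t : ι → ℝ}
    (hγ : Tendsto γ l (𝓝 0)) (ht : Tendsto (fun i => t i * γ i ^ 4) l (𝓝 0)) :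
    Tendsto (fun i => cos (γ i) ^ t i * exp (t i * γ i ^ 2 / 2)) l (𝓝 1) := by
  have hsmall : ∀ᶠ i in l, |γ i| ≤ 1 / 2 := by
    simpa using hγ.abs.eventually (ge_mem_nhds (by norm_num : |(0 : ℝ)| < 1 / 2))
  have herr : Tendsto (fun i => t i * (log (cos (γ i)) + γ i ^ 2 / 2)) l (𝓝 0) := by
    refine squeeze_zero_norm' ?_ (by simpa using ht.abs.const_mul 3)
    filter_upwards [hsmall] with i hi
    rw [norm_mul, norm_eq_abs, norm_eq_abs, Even.pow_abs ⟨2, rfl⟩]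
    nlinarith [abs_log_cos_add_sq_div_two_le hi, abs_nonneg (t i)]
  refine ((continuous_exp.tendsto' 0 1 exp_zero).comp herr).congr' ?_
  filter_upwards [hsmall] with i hi
  rw [Function.comp_apply, rpow_def_of_pos (cos_pos_of_le_one (hi.trans (by norm_num))),
    ← exp_add]
  ring_nf

lemma tendsto_log_const_mul_div_log {c : ℝ} (hc : 0 < c) :
    Tendsto (fun x => log (c * x) / log x) atTop (𝓝 1) := by
  have h := (tendsto_log_atTop.inv_tendsto_atTop.const_mul (log c)).const_add 1
  rw [mul_zero, add_zero] at h
  refine h.congr' ?_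
  filter_upwards [eventually_gt_atTop 1] with x hx
  have hlog : log x ≠ 0 := (log_pos hx).ne'
  rw [log_mul hc.ne' (by positivity), add_div, div_self hlog, div_eq_mul_inv, add_comm]
  rfl

lemma tendsto_log_const_mul_pow_div {c : ℝ} (hc : 0 < c) (n : ℕ) :
    Tendsto (fun x => log (c * x) ^ n / x) atTop (𝓝 0) := by
  have h := ((tendsto_pow_log_div_mul_add_atTop 1 0 n one_ne_zero).comp
    (tendsto_id.const_mul_atTop hc)).const_mul c
  rw [mul_zero] at h
  refine h.congr' ?_
  filter_upwards [eventually_gt_atTop 0] with x hx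
  simp only [Function.comp_apply, id, one_mul, add_zero]
  field_simp

lemma tendsto_sqrt_log_const_mul_div_mul {c : ℝ} (hc : 0 < c) (lam : ℝ) :
    Tendsto (fun x => √(log (c * x) / (x * lam))) atTop (𝓝 0) := by
  simpa only [pow_one, zero_div, sqrt_zero, div_div] using
    ((tendsto_log_const_mul_pow_div hc 1).div_const lam).sqrt

lemma tendsto_sqrt_mul_cos_rpow {c lam : ℝ} (hc : 0 < c) (hlam : 0 < lam) :
    Tendsto (fun x => √x * cos (√(log (c * x) / (x * lam))) ^ (x * lam)) atTop
      (𝓝 (√c)⁻¹) := by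
  have hsq : ∀ᶠ x in atTop, √(log (c * x) / (x * lam)) ^ 2 = log (c * x) / (x * lam) := by
    filter_upwards [eventually_ge_atTop c⁻¹, eventually_gt_atTop 0] with x hx hx0
    have hL : 0 ≤ log (c * x) := log_nonneg (by rwa [← inv_le_iff_one_le_mul₀' hc])
    exact sq_sqrt (by positivity)
  have ht : Tendsto (fun x => x * lam * √(log (c * x) / (x * lam)) ^ 4) atTop (𝓝 0) := by
    have h := (tendsto_log_const_mul_pow_div hc 2).div_const lam
    rw [zero_div] at h
    refine h.congr' ?_
    filter_upwards [hsq, eventually_gt_atTop 0] with x hx hx0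
    rw [show 4 = 2 * 2 from rfl, pow_mul, hx]
    field_simp
  have h := (tendsto_cos_rpow_mul_exp (tendsto_sqrt_log_const_mul_div_mul hc lam) ht).const_mul
    (√c)⁻¹
  rw [mul_one] at h
  refine h.congr' ?_
  filter_upwards [hsq, eventually_gt_atTop 0] with x hx hx0
  rw [hx, mul_div_cancel₀ _ (by positivity), exp_half, exp_log (by positivity), sqrt_mul hc.le]
  field_simp

/-- **Depth-1 QAOA satisfied fraction for MAX-k-XOR-SAT.** Fix `λ > 0`. With
`γ_k = √(ln(4k/π²)/(kλ))`, `β_k = 1/(2√k)`, `p_k = cos(2β_k)`, `q_k = sin(2β_k)`,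
`c_k = cos(γ_k)`, `A_k = (p_k + i·q_k·c_k^{kλ})^k`, and the expected satisfied fraction
`F_k = 1/2 + (sin γ_k / 2)·Im(A_k)`, the rescaled excess `√(kλ/ln k)·(F_k - 1/2)`
converges, as `k → ∞`, to `1/(2√e)`. Here `c_k^{kλ}` is a real power (rpow). -/
theorem qaoa_satisfied_fraction_limit (lam : ℝ) (hlam : 0 < lam) :
    Tendsto (fun k : ℕ =>
        let γ : ℝ := Real.sqrt (Real.log (4 * k / Real.pi ^ 2) / (k * lam))
        let β : ℝ := 1 / (2 * Real.sqrt k)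
        let A : ℂ := (((Real.cos (2 * β)) : ℂ)
          + Complex.I * ((Real.sin (2 * β)) : ℂ)
            * (((Real.cos γ) ^ ((k : ℝ) * lam) : ℝ) : ℂ)) ^ k
        let F : ℝ := 1 / 2 + (Real.sin γ / 2) * A.im
        Real.sqrt ((k * lam) / Real.log k) * (F - 1 / 2))
      atTop (nhds (1 / (2 * Real.sqrt (Real.exp 1)))) := by
  set c : ℝ := 4 / π ^ 2 with hc_def
  have hc : 0 < c := by positivity
  have hsqrt_c : (√c)⁻¹ = π / 2 := by
    rw [hc_def, sqrt_div' _ (sq_nonneg π), sqrt_sq pi_pos.le,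
      show (4 : ℝ) = 2 ^ 2 by norm_num, sqrt_sq zero_le_two, inv_div]
  have hcast : ∀ k : ℕ, 4 * (k : ℝ) / π ^ 2 = c * k := fun k => by ring
  have h2β : ∀ k : ℕ, 2 * (1 / (2 * √(k : ℝ))) = (√k)⁻¹ := fun k => by
    rw [one_div, mul_inv, mul_inv_cancel_left₀ two_ne_zero]
  set γ : ℕ → ℝ := fun k => √(log (c * k) / (k * lam))
  set A : ℕ → ℂ := fun k => (((cos (√k)⁻¹ : ℝ) : ℂ)
    + Complex.I * ((sin (√k)⁻¹ : ℝ) : ℂ) * ((cos (γ k) ^ ((k : ℝ) * lam) : ℝ) : ℂ)) ^ k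
  have hA : Tendsto (fun k => (A k).im) atTop (𝓝 (exp (-1 / 2))) := by
    have h := (Complex.continuous_im.tendsto _).comp (tendsto_cos_add_I_mul_sin_mul_pow
      ((tendsto_sqrt_mul_cos_rpow hc hlam).comp tendsto_natCast_atTop_atTop))
    have him : (Complex.exp (-1 / 2 + ((√c)⁻¹ : ℝ) * Complex.I)).im = exp (-1 / 2) := by
      rw [hsqrt_c, Complex.exp_im]
      norm_num
    rwa [him] at h
  have hratio := ((tendsto_log_const_mul_div_log hc).comp tendsto_natCast_atTop_atTop).sqrt
  have hsinc := tendsto_sinc_of_tendsto_zero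
    ((tendsto_sqrt_log_const_mul_div_mul hc lam).comp tendsto_natCast_atTop_atTop)
  have hlim := ((hratio.mul hsinc).mul hA).div_const 2
  convert hlim.congr' ?_ using 2
  · rw [sqrt_one, one_mul, one_mul, neg_div, exp_neg, exp_half]
    field_simp
  · filter_upwards [eventually_gt_atTop 1] with k hk
    dsimp only [Function.comp_apply]
    rw [hcast, h2β, ← mul_sinc]
    have hlog : 0 < log (k : ℝ) := log_pos (by exact_mod_cast hk)
    have hroot :
        √(k * lam / log k) * √(log (c * k) / (k * lam)) = √(log (c * k) / log k) := by
      rw [← sqrt_mul (by positivity)]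
      field_simp
    rw [← hroot]
    ring
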